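/- arXiv:2210.13816 — 3 statements merged into one kernel-verified Lean document; each statement's English description precedes it below -/
import Mathlib

section
/- Let (E, μ) be a measure space and let f and f̃ be probability density functions with respect to μ. Suppose G ⊆ E is measurable with ∫_{G^c} f dμ ≤ δ for some δ ≥ 0, and f(x)/f̃(x) ≤ exp(ε) for all x ∈ G. Then for every measurable set S ⊆ E, ∫_S f dμ ≤ exp(ε) ∫_S f̃ dμ + δ. -/
open MeasureTheory
open scoped ENNReal

theorem setLIntegral_le_const_mul_add_lintegral_compl {α : Type*} [MeasurableSpace α]
    {μ : Measure α} {f g : α → ℝ≥0∞} {s t : Set α} {c : ℝ≥0∞}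
    (hg : Measurable g) (ht : MeasurableSet t) (hfg : ∀ x ∈ t, f x ≤ c * g x) :
    ∫⁻ x in s, f x ∂μ ≤ c * ∫⁻ x in s, g x ∂μ + ∫⁻ x in tᶜ, f x ∂μ := by
  rw [← lintegral_inter_add_sdiff f s ht]
  gcongr ?_ + ?_
  · calc ∫⁻ x in s ∩ t, f x ∂μ
        ≤ ∫⁻ x in s ∩ t, c * g x ∂μ := setLIntegral_mono (hg.const_mul c) fun x hx => hfg x hx.2
      _ = c * ∫⁻ x in s ∩ t, g x ∂μ := lintegral_const_mul c hg
      _ ≤ c * ∫⁻ x in s, g x ∂μ := by gcongr; exact Set.inter_subset_left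
  · exact lintegral_mono_set (Set.sdiff_subset_compl s t)

theorem stmt2_general {E : Type*} [MeasurableSpace E] (μ : Measure E)
    (f ftilde : E → ℝ≥0∞) (hftilde : Measurable ftilde)
    (G : Set E) (hG : MeasurableSet G)
    (ε δ : ℝ)
    (htail : ∫⁻ x in Gᶜ, f x ∂μ ≤ ENNReal.ofReal δ)
    (hratio : ∀ x ∈ G, f x ≤ ENNReal.ofReal (Real.exp ε) * ftilde x)
    (S : Set E) :
    ∫⁻ x in S, f x ∂μ ≤ ENNReal.ofReal (Real.exp ε) * ∫⁻ x in S, ftilde x ∂μ +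
      ENNReal.ofReal δ :=
  (setLIntegral_le_const_mul_add_lintegral_compl hftilde hG hratio).trans
    (add_le_add_right htail _)

/-- Abstract (ε,δ)-differential privacy lemma: if `f/f̃ ≤ exp ε` on `G` and the mass of `f`
outside `G` is at most `δ`, then `∫_S f ≤ exp ε · ∫_S f̃ + δ` for every measurable `S`. -/
theorem stmt2 {E : Type*} [MeasurableSpace E] (μ : Measure E)
    (f ftilde : E → ℝ≥0∞) (hf : Measurable f) (hftilde : Measurable ftilde)
    (hf1 : ∫⁻ x, f x ∂μ = 1) (hftilde1 : ∫⁻ x, ftilde x ∂μ = 1)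
    (G : Set E) (hG : MeasurableSet G)
    (ε δ : ℝ) (hε : 0 ≤ ε) (hδ : 0 ≤ δ)
    (htail : ∫⁻ x in Gᶜ, f x ∂μ ≤ ENNReal.ofReal δ)
    (hratio : ∀ x ∈ G, f x ≤ ENNReal.ofReal (Real.exp ε) * ftilde x)
    (S : Set E) (hS : MeasurableSet S) :
    ∫⁻ x in S, f x ∂μ ≤ ENNReal.ofReal (Real.exp ε) * ∫⁻ x in S, ftilde x ∂μ +
      ENNReal.ofReal δ :=
  stmt2_general μ f ftilde hftilde G hG ε δ htail hratio S
end

section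
/- Let λ, λ̃ : [0,∞) → (0,∞) be intensity functions with λ(t) ≥ ρ and λ̃(t) ≥ ρ and |λ(t) - λ̃(t)| ≤ K for all t ≥ 0, where ρ > 0 and K > 1. Let τ and τ̃ be the first arrival times of inhomogeneous Poisson processes with rates λ and λ̃ respectively. Then for any ε > log(1 + K/ρ), setting δ = exp(-(ρ/K)·[ε - log(1 + K/ρ)]), it holds that for every measurable S ⊆ [0,∞): P(τ ∈ S) ≤ exp(ε)·P(τ̃ ∈ S) + δ. -/
/-!
Put `T = (ε - log (1 + K/ρ)) / K`. Up to time `T` the two densities have ratio at most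
`(1 + K/ρ) e^{KT} = e^ε`: the rates satisfy `λ ≤ (1 + K/ρ) λ̃` because `λ̃ ≥ ρ`, and the cumulative
intensities differ by at most `K t`. Beyond `T` the first density has mass at most
`exp (-∫₀ᵀ λ) ≤ e^{-ρT} = δ`. As `λ` is merely integrable, that tail bound goes through the
monotone function `t ↦ -exp (-∫₀ᵗ λ)`, whose a.e. derivative (Lebesgue differentiation) is the
density, and the fact that a monotone function dominates the integral of its derivative.
-/

open Real MeasureTheory Set
open scoped ENNReal

theorem setLIntegral_le_mul_add_of_forall_diff {α : Type*} [MeasurableSpace α] {μ : Measure α}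
    {f g : α → ℝ≥0∞} {S A : Set α} {c : ℝ≥0∞} (hc : c ≠ ∞) (hS : MeasurableSet S)
    (hA : MeasurableSet A)
    (h : ∀ x ∈ S \ A, f x ≤ c * g x) :
    ∫⁻ x in S, f x ∂μ ≤ c * ∫⁻ x in S, g x ∂μ + ∫⁻ x in A, f x ∂μ :=
  calc ∫⁻ x in S, f x ∂μ ≤ ∫⁻ x in S \ A ∪ A, f x ∂μ :=
        lintegral_mono_set (by rw [sdiff_union_self]; exact subset_union_left)
    _ ≤ ∫⁻ x in S \ A, f x ∂μ + ∫⁻ x in A, f x ∂μ := lintegral_union_le _ _ _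
    _ ≤ ∫⁻ x in S \ A, c * g x ∂μ + ∫⁻ x in A, f x ∂μ := by
        gcongr ?_ + _; exact setLIntegral_mono' (hS.diff hA) h
    _ ≤ c * ∫⁻ x in S, g x ∂μ + ∫⁻ x in A, f x ∂μ := by
        rw [lintegral_const_mul' _ _ hc]
        gcongr; exact sdiff_subset

theorem le_one_add_div_mul_of_sub_le {x y ρ K : ℝ} (hρ : 0 < ρ) (hK : 0 ≤ K) (hy : ρ ≤ y)
    (h : x - y ≤ K) : x ≤ (1 + K / ρ) * y := by
  have : K ≤ K / ρ * y := by
    rw [div_mul_eq_mul_div, le_div_iff₀ hρ]; exact mul_le_mul_of_nonneg_left hy hK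
  linarith

theorem exp_neg_integral_le_exp_mul_exp_neg_integral {f g : ℝ → ℝ} {a t K : ℝ} (hat : a ≤ t)
    (hf : IntervalIntegrable f volume a t) (hg : IntervalIntegrable g volume a t)
    (h : ∀ s ∈ Icc a t, g s - f s ≤ K) :
    exp (-∫ s in a..t, f s) ≤ exp (K * (t - a)) * exp (-∫ s in a..t, g s) := by
  rw [← exp_add, exp_le_exp]
  have : ∫ s in a..t, (g s - f s) ≤ ∫ s in a..t, K :=
    intervalIntegral.integral_mono_on hat (hg.sub hf) intervalIntegrable_const h
  rw [intervalIntegral.integral_sub hg hf, intervalIntegral.integral_const, smul_eq_mul] at this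
  linarith

theorem mul_exp_neg_integral_le_of_abs_sub_le {f g : ℝ → ℝ} {a t ρ K : ℝ} (hat : a ≤ t)
    (hρ : 0 < ρ) (hK : 0 ≤ K) (hg_ge : ρ ≤ g t)
    (hf : IntervalIntegrable f volume a t) (hg : IntervalIntegrable g volume a t)
    (hfg : ∀ s ∈ Icc a t, |f s - g s| ≤ K) :
    f t * exp (-∫ s in a..t, f s) ≤
      (1 + K / ρ) * exp (K * (t - a)) * (g t * exp (-∫ s in a..t, g s)) := by
  have hft : f t ≤ (1 + K / ρ) * g t :=
    le_one_add_div_mul_of_sub_le hρ hK hg_ge (abs_le.1 (hfg t ⟨hat, le_rfl⟩)).2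
  have hexp := exp_neg_integral_le_exp_mul_exp_neg_integral (K := K) hat hf hg fun s hs =>
    by linarith [(abs_le.1 (hfg s hs)).1]
  calc f t * exp (-∫ s in a..t, f s)
      ≤ ((1 + K / ρ) * g t) * (exp (K * (t - a)) * exp (-∫ s in a..t, g s)) :=
        mul_le_mul hft hexp (exp_pos _).le (by have := hρ.trans_le hg_ge; positivity)
    _ = _ := by ring

theorem integral_mul_exp_neg_integral_le {f : ℝ → ℝ} {a T b : ℝ} (haT : a ≤ T) (hTb : T ≤ b)
    (hf : IntervalIntegrable f volume a b) (hpos : ∀ t ∈ Icc a b, 0 ≤ f t) :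
    ∫ t in T..b, f t * exp (-∫ s in a..t, f s) ≤
      exp (-∫ s in a..T, f s) - exp (-∫ s in a..b, f s) := by
  set G : ℝ → ℝ := fun t => -exp (-∫ s in a..t, f s)
  have hsub : Icc T b ⊆ uIcc a b := by
    rw [uIcc_of_le (haT.trans hTb)]; exact Icc_subset_Icc_left haT
  have hGmono : MonotoneOn G (uIcc T b) := by
    rw [uIcc_of_le hTb]
    intro x hx y hy hxy
    have hF : ∫ s in a..x, f s ≤ ∫ s in a..y, f s :=
      intervalIntegral.integral_mono_interval le_rfl (haT.trans hx.1) hxy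
        ((ae_restrict_iff' measurableSet_Ioc).2 (Filter.Eventually.of_forall fun t ht =>
          hpos t ⟨ht.1.le, ht.2.trans hy.2⟩))
        (hf.mono_set (uIcc_subset_uIcc left_mem_uIcc (hsub hy)))
    simpa [G] using hF
  have hderiv : ∀ᵐ t, t ∈ uIoc T b → f t * exp (-∫ s in a..t, f s) = deriv G t := by
    filter_upwards [hf.ae_hasDerivAt_integral] with t ht htT
    rw [uIoc_of_le hTb] at htT
    have hG : HasDerivAt G (-(exp (-∫ s in a..t, f s) * -f t)) t :=
      ((ht (hsub (Ioc_subset_Icc_self htT)) a left_mem_uIcc).neg.exp).neg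
    rw [hG.deriv]; ring
  rw [intervalIntegral.integral_congr_ae hderiv]
  have hFTC := hGmono.intervalIntegral_deriv_mem_uIcc
  rw [uIcc_of_le (sub_nonneg.2 (hGmono (by simp) (by simp) hTb))] at hFTC
  linarith [hFTC.2]

theorem lintegral_Ioi_mul_exp_neg_integral_le {f : ℝ → ℝ} {a T : ℝ} (haT : a ≤ T)
    (hf : ∀ b, a ≤ b → IntervalIntegrable f volume a b) (hpos : ∀ t, a ≤ t → 0 ≤ f t) :
    ∫⁻ t in Ioi T, ENNReal.ofReal (f t * exp (-∫ s in a..t, f s)) ≤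
      ENNReal.ofReal (exp (-∫ s in a..T, f s)) := by
  set g : ℝ → ℝ := fun t => f t * exp (-∫ s in a..t, f s)
  rw [← withDensity_apply _ measurableSet_Ioi, ← iUnion_Ioc_right,
    Monotone.measure_iUnion fun b c hbc => Ioc_subset_Ioc_right hbc]
  refine iSup_le fun b => ?_
  rcases le_or_gt b T with hbT | hTb
  · simp [Ioc_eq_empty_of_le hbT]
  have hab := haT.trans hTb.le
  have hsub : uIcc T b ⊆ uIcc a b :=
    uIcc_subset_uIcc_right (by simp [uIcc_of_le hab, haT, hTb.le])
  have hg : IntervalIntegrable g volume T b :=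
    ((hf b hab).mono_set hsub).mul_continuousOn
      (((intervalIntegral.continuousOn_primitive_interval' (hf b hab) left_mem_uIcc).mono
        hsub).neg.rexp)
  have hg_nonneg : 0 ≤ᵐ[volume.restrict (Ioc T b)] g :=
    ae_restrict_of_forall_mem measurableSet_Ioc fun t ht =>
      mul_nonneg (hpos t (haT.trans ht.1.le)) (exp_pos _).le
  rw [withDensity_apply _ measurableSet_Ioc,
    ← ofReal_integral_eq_lintegral_ofReal hg.1 hg_nonneg, ← intervalIntegral.integral_of_le hTb.le]
  refine ENNReal.ofReal_le_ofReal ((integral_mul_exp_neg_integral_le haT hTb.le (hf b hab)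
    fun t ht => hpos t ht.1).trans ?_)
  linarith [exp_pos (-∫ s in a..b, f s)]

/-- (ε,δ)-differential privacy of communicated switching times (Theorem 5.1):
the laws of the first arrival times τ, τ̃, with densities `λ(t)·exp(-∫₀ᵗ λ)` and
`λ̃(t)·exp(-∫₀ᵗ λ̃)`, satisfy `P(τ ∈ S) ≤ exp(ε)·P(τ̃ ∈ S) + δ` for every measurable
`S ⊆ [0,∞)`. -/
theorem stmt3 (lam lam' : ℝ → ℝ) (ρ K : ℝ) (hρ : 0 < ρ) (hK : 1 < K)
    (hlb : ∀ t, 0 ≤ t → ρ ≤ lam t) (hlb' : ∀ t, 0 ≤ t → ρ ≤ lam' t)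
    (hdiff : ∀ t, 0 ≤ t → |lam t - lam' t| ≤ K)
    (hint : ∀ t, 0 ≤ t → IntervalIntegrable lam volume 0 t)
    (hint' : ∀ t, 0 ≤ t → IntervalIntegrable lam' volume 0 t)
    (ε : ℝ) (hε : Real.log (1 + K / ρ) < ε)
    (δ : ℝ) (hδ : δ = Real.exp (-(ρ / K) * (ε - Real.log (1 + K / ρ))))
    (S : Set ℝ) (hS : MeasurableSet S) (hS0 : S ⊆ Set.Ici (0:ℝ)) :
    ∫⁻ t in S, ENNReal.ofReal (lam t * Real.exp (-∫ s in (0:ℝ)..t, lam s)) ∂volume ≤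
      ENNReal.ofReal (Real.exp ε) *
        ∫⁻ t in S, ENNReal.ofReal (lam' t * Real.exp (-∫ s in (0:ℝ)..t, lam' s)) ∂volume +
      ENNReal.ofReal δ := by
  have hK0 : 0 < K := one_pos.trans hK
  set T := (ε - log (1 + K / ρ)) / K
  have hT : 0 ≤ T := div_nonneg (sub_nonneg.2 hε.le) hK0.le
  have hKT : K * T = ε - log (1 + K / ρ) := mul_div_cancel₀ _ hK0.ne'
  have hexp_ε : exp ε = (1 + K / ρ) * exp (K * T) := by
    rw [hKT, exp_sub, exp_log (by positivity)]
    field_simp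
  have hδT : δ = exp (-(ρ * T)) := by rw [hδ, ← hKT]; congr 1; field_simp
  refine (setLIntegral_le_mul_add_of_forall_diff (A := Ioi T) ENNReal.ofReal_ne_top hS
    measurableSet_Ioi fun t ht => ?_).trans (add_le_add le_rfl ?_)
  · obtain ⟨htS, htT⟩ := ht
    have ht : 0 ≤ t := hS0 htS
    rw [← ENNReal.ofReal_mul (exp_pos ε).le]
    refine ENNReal.ofReal_le_ofReal ((mul_exp_neg_integral_le_of_abs_sub_le ht hρ hK0.le
      (hlb' t ht) (hint t ht) (hint' t ht) fun s hs => hdiff s hs.1).trans ?_)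
    rw [hexp_ε, sub_zero]
    gcongr
    · exact mul_nonneg (hρ.le.trans (hlb' t ht)) (exp_pos _).le
    · exact not_lt.1 htT
  · refine (lintegral_Ioi_mul_exp_neg_integral_le hT hint
      fun t ht => hρ.le.trans (hlb t ht)).trans (ENNReal.ofReal_le_ofReal ?_)
    rw [hδT, exp_le_exp, neg_le_neg_iff]
    have := intervalIntegral.integral_mono_on hT intervalIntegrable_const (hint T hT)
      fun s hs => hlb s hs.1
    simpa [mul_comm] using this
end

section
/- Suppose λ, λ̃ : [0,∞) → (0,∞) satisfy λ(t) ≤ α + βt for all t ≥ 0 (with α, β ≥ 0) and (1/γ) ≤ λ̃(t)/λ(t) ≤ γ for all t ≥ 0 with γ > 1. Then for all t ≥ 0, exp(-∫_0^t λ(s) ds)·λ(t) / (exp(-∫_0^t λ̃(s) ds)·λ̃(t)) ≤ γ·exp((γ-1)·(αt + βt²/2)). -/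
/-!
The survival factors differ by `exp (∫₀ᵗ (λ̃ - λ))`, and `λ̃ - λ ≤ (γ - 1) λ ≤ (γ - 1)(α + βs)`
bounds that exponent; the remaining factor `λ(t) / λ̃(t)` is at most `γ` by the lower ratio bound.
-/

open Real MeasureTheory Set

lemma integral_affine (α β t : ℝ) :
    ∫ s in (0:ℝ)..t, (α + β * s) = α * t + β * t ^ 2 / 2 := by
  rw [intervalIntegral.integral_add intervalIntegrable_const
      ((by fun_prop : Continuous fun s => β * s).intervalIntegrable _ _),
    intervalIntegral.integral_const_mul, integral_id, intervalIntegral.integral_const, smul_eq_mul]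
  ring

lemma integral_sub_le_of_le_mul_of_le_affine {lam lam' : ℝ → ℝ} {α β γ t : ℝ} (hγ : 1 ≤ γ)
    (ht : 0 ≤ t) (hint : IntervalIntegrable lam volume 0 t)
    (hint' : IntervalIntegrable lam' volume 0 t)
    (hub : ∀ s ∈ Icc 0 t, lam s ≤ α + β * s) (hle : ∀ s ∈ Icc 0 t, lam' s ≤ γ * lam s) :
    (∫ s in (0:ℝ)..t, lam' s) - ∫ s in (0:ℝ)..t, lam s ≤ (γ - 1) * (α * t + β * t ^ 2 / 2) := by
  have hpointwise : ∀ s ∈ Icc 0 t, lam' s - lam s ≤ (γ - 1) * (α + β * s) := fun s hs => by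
    nlinarith [hub s hs, hle s hs]
  calc (∫ s in (0:ℝ)..t, lam' s) - ∫ s in (0:ℝ)..t, lam s
      = ∫ s in (0:ℝ)..t, (lam' s - lam s) := (intervalIntegral.integral_sub hint' hint).symm
    _ ≤ ∫ s in (0:ℝ)..t, (γ - 1) * (α + β * s) :=
      intervalIntegral.integral_mono_on ht (hint'.sub hint)
        ((by fun_prop : Continuous fun s => (γ - 1) * (α + β * s)).intervalIntegrable _ _)
        hpointwise
    _ = (γ - 1) * (α * t + β * t ^ 2 / 2) := by
      rw [intervalIntegral.integral_const_mul, integral_affine]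

lemma exp_neg_mul_div_exp_neg_mul (A B x y : ℝ) :
    exp (-A) * x / (exp (-B) * y) = exp (B - A) * (x / y) := by
  rw [mul_div_mul_comm, ← exp_sub]
  ring_nf

theorem stmt5_general (lam lam' : ℝ → ℝ) (α β γ : ℝ) (hγ : 1 < γ)
    (hpos : ∀ t, 0 ≤ t → 0 < lam t)
    (hub : ∀ t, 0 ≤ t → lam t ≤ α + β * t)
    (hratio : ∀ t, 0 ≤ t → 1 / γ ≤ lam' t / lam t ∧ lam' t / lam t ≤ γ)
    (hint : ∀ t, 0 ≤ t → IntervalIntegrable lam volume 0 t)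
    (hint' : ∀ t, 0 ≤ t → IntervalIntegrable lam' volume 0 t)
    (t : ℝ) (ht : 0 ≤ t) :
    Real.exp (-∫ s in (0:ℝ)..t, lam s) * lam t /
      (Real.exp (-∫ s in (0:ℝ)..t, lam' s) * lam' t) ≤
      γ * Real.exp ((γ - 1) * (α * t + β * t ^ 2 / 2)) := by
  have hγ₀ : 0 < γ := zero_lt_one.trans hγ
  have hlow := (hratio t ht).1
  have hratio_pos : 0 < lam' t / lam t := (one_div_pos.2 hγ₀).trans_le hlow
  have hlam't : 0 < lam' t := (div_pos_iff_of_pos_right (hpos t ht)).1 hratio_pos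
  have hdensity : lam t / lam' t ≤ γ := by
    simpa only [inv_div, one_div, inv_inv] using inv_anti₀ (one_div_pos.2 hγ₀) hlow
  have hcompensator := integral_sub_le_of_le_mul_of_le_affine hγ.le ht (hint t ht) (hint' t ht)
    (fun s hs => hub s hs.1) (fun s hs => (div_le_iff₀ (hpos s hs.1)).1 (hratio s hs.1).2)
  rw [exp_neg_mul_div_exp_neg_mul, mul_comm γ]
  exact mul_le_mul (exp_le_exp.2 hcompensator) hdensity (div_nonneg (hpos t ht).le hlam't.le)
    (exp_pos _).le

/-- Ratio bound for first-arrival densities when `λ(t) ≤ α + βt` and the pointwise ratio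
`λ̃/λ` lies in `[1/γ, γ]`. -/
theorem stmt5 (lam lam' : ℝ → ℝ) (α β γ : ℝ) (hα : 0 ≤ α) (hβ : 0 ≤ β) (hγ : 1 < γ)
    (hpos : ∀ t, 0 ≤ t → 0 < lam t) (hpos' : ∀ t, 0 ≤ t → 0 < lam' t)
    (hub : ∀ t, 0 ≤ t → lam t ≤ α + β * t)
    (hratio : ∀ t, 0 ≤ t → 1 / γ ≤ lam' t / lam t ∧ lam' t / lam t ≤ γ)
    (hint : ∀ t, 0 ≤ t → IntervalIntegrable lam volume 0 t)
    (hint' : ∀ t, 0 ≤ t → IntervalIntegrable lam' volume 0 t)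
    (t : ℝ) (ht : 0 ≤ t) :
    Real.exp (-∫ s in (0:ℝ)..t, lam s) * lam t /
      (Real.exp (-∫ s in (0:ℝ)..t, lam' s) * lam' t) ≤
      γ * Real.exp ((γ - 1) * (α * t + β * t ^ 2 / 2)) :=
  stmt5_general lam lam' α β γ hγ hpos hub hratio hint hint' t ht
end
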